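/- (Compression of a Mahler relation in z^q to one in z.) Let f ∈ K[[z]] and suppose there are polynomials q_{-1}, q_1, ..., q_r ∈ K[z], not all zero, with q_{-1}(z) + q_1(z) f(z^q) + q_2(z) f(z^{q^2}) + ... + q_r(z) f(z^{q^r}) = 0. Then there exist polynomials q̃_{-1}, q̃_0, ..., q̃_{r−1} ∈ K[z], not all zero, with q̃_{-1}(z) + q̃_0(z) f(z) + ... + q̃_{r−1}(z) f(z^{q^{r−1}}) = 0. Moreover, if some q_i with i ≥ 1 is nonzero, the q̃_j can be chosen with q̃_{j_0} ≠ 0 where j_0 = min{i ≥ 1 : q_i ≠ 0} − 1. -/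

import Mathlib

open Polynomial PowerSeries

/-- Substitution `z ↦ z^m` in a formal power series. -/
noncomputable def psExpand (K : Type*) [Field K] (m : ℕ) (f : PowerSeries K) : PowerSeries K :=
  PowerSeries.mk fun k => if m ∣ k then PowerSeries.coeff (k / m) f else 0

/-- `K(z)` acts on Laurent series via the Laurent expansion at the origin. -/
noncomputable instance {K : Type*} [Field K] : Algebra (RatFunc K) (LaurentSeries K) :=
  RingHom.toAlgebra (@algebraMap _ _ _ _ (RatFunc.liftAlgebra K (LaurentSeries K)))

namespace MahlerCompress

variable {K : Type*} [Field K]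

/-- The `k`-th `q`-section of a power series. -/
noncomputable def psSect (q k : ℕ) : PowerSeries K →+ PowerSeries K where
  toFun g := PowerSeries.mk fun n => PowerSeries.coeff (q * n + k) g
  map_zero' := by ext n; simp
  map_add' a b := by ext n; simp

lemma psSect_coeff (q k : ℕ) (g : PowerSeries K) (n : ℕ) :
    PowerSeries.coeff n (psSect q k g) = PowerSeries.coeff (q * n + k) g := by
  simp [psSect]

lemma psExpand_coeff (m : ℕ) (f : PowerSeries K) (n : ℕ) :
    PowerSeries.coeff n (psExpand K m f) =
      if m ∣ n then PowerSeries.coeff (n / m) f else 0 := by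
  simp [psExpand]

lemma psExpand_mul (m n : ℕ) (hm : 0 < m) (f : PowerSeries K) :
    psExpand K (m * n) f = psExpand K m (psExpand K n f) := by
  ext j
  rw [psExpand_coeff, psExpand_coeff]
  by_cases h : m ∣ j
  · rw [if_pos h, psExpand_coeff]
    obtain ⟨t, rfl⟩ := h
    have h1 : m * n ∣ m * t ↔ n ∣ t := mul_dvd_mul_iff_left (by omega : (m:ℕ) ≠ 0)
    rw [Nat.mul_div_cancel_left t hm]
    by_cases h2 : n ∣ t
    · obtain ⟨s, rfl⟩ := h2
      rw [if_pos (h1.mpr ⟨s, rfl⟩), if_pos ⟨s, rfl⟩]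
      congr 1
      rcases Nat.eq_zero_or_pos n with hn | hn
      · subst hn; simp
      · rw [show m * (n * s) = m * n * s by ring,
          Nat.mul_div_cancel_left s (Nat.mul_pos hm hn), Nat.mul_div_cancel_left s hn]
    · rw [if_neg (fun hh => h2 (h1.mp hh)), if_neg h2]
  · rw [if_neg h, if_neg (fun hh => h (dvd_trans (Dvd.intro n rfl) hh))]

lemma psSect_mul_expand (q k : ℕ) (hq : 0 < q) (hk : k < q) (a b : PowerSeries K) :
    psSect q k (a * psExpand K q b) = psSect q k a * b := by
  ext n
  rw [psSect_coeff, PowerSeries.coeff_mul, PowerSeries.coeff_mul]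
  rw [← Finset.sum_filter_add_sum_filter_not _ (fun p => q ∣ p.2)]
  have hz : ∑ p ∈ (Finset.HasAntidiagonal.antidiagonal (q * n + k)).filter (fun p => ¬ q ∣ p.2),
      (PowerSeries.coeff p.1 a) * (PowerSeries.coeff p.2 (psExpand K q b)) = 0 := by
    apply Finset.sum_eq_zero
    intro p hp
    rw [Finset.mem_filter] at hp
    rw [psExpand_coeff, if_neg hp.2, mul_zero]
  rw [hz, add_zero]
  apply Finset.sum_nbij' (i := fun p => ((p.1 - k) / q, p.2 / q))
    (j := fun p => (q * p.1 + k, q * p.2))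
  · -- hi : filter → antidiagonal n
    intro p hp
    rw [Finset.mem_filter, Finset.HasAntidiagonal.mem_antidiagonal] at hp
    obtain ⟨hsum, d, hd⟩ := hp
    rw [Finset.HasAntidiagonal.mem_antidiagonal]
    have hdn : d ≤ n := by
      by_contra hcon
      push_neg at hcon
      have h3 : q * (n + 1) ≤ q * d := Nat.mul_le_mul_left q hcon
      rw [Nat.mul_succ] at h3
      linarith
    have h2 : q * (n - d) + q * d = q * n := by rw [← Nat.mul_add, Nat.sub_add_cancel hdn]
    have hp1 : p.1 = q * (n - d) + k := by linarith
    have e1 : (p.1 - k) / q = n - d := by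
      rw [hp1, Nat.add_sub_cancel, Nat.mul_div_cancel_left _ hq]
    have e2 : p.2 / q = d := by rw [hd, Nat.mul_div_cancel_left _ hq]
    rw [e1, e2]
    omega
  · -- hj : antidiagonal n → filter
    intro p hp
    rw [Finset.HasAntidiagonal.mem_antidiagonal] at hp
    rw [Finset.mem_filter, Finset.HasAntidiagonal.mem_antidiagonal]
    constructor
    · rw [← hp]; ring
    · exact Dvd.intro _ rfl
  · -- left inverse
    intro p hp
    rw [Finset.mem_filter, Finset.HasAntidiagonal.mem_antidiagonal] at hp
    obtain ⟨hsum, d, hd⟩ := hp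
    have hdn : d ≤ n := by
      by_contra hcon
      push_neg at hcon
      have h3 : q * (n + 1) ≤ q * d := Nat.mul_le_mul_left q hcon
      rw [Nat.mul_succ] at h3
      linarith
    have h2 : q * (n - d) + q * d = q * n := by rw [← Nat.mul_add, Nat.sub_add_cancel hdn]
    have hp1 : p.1 = q * (n - d) + k := by linarith
    have e1 : (p.1 - k) / q = n - d := by
      rw [hp1, Nat.add_sub_cancel, Nat.mul_div_cancel_left _ hq]
    have e2 : p.2 / q = d := by rw [hd, Nat.mul_div_cancel_left _ hq]
    simp only [e1, e2, ← hp1, ← hd]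
  · -- right inverse
    intro p _
    simp [Nat.add_sub_cancel, Nat.mul_div_cancel_left _ hq]
  · -- values agree
    intro p hp
    rw [Finset.mem_filter, Finset.HasAntidiagonal.mem_antidiagonal] at hp
    obtain ⟨hsum, d, hd⟩ := hp
    have hdn : d ≤ n := by
      by_contra hcon
      push_neg at hcon
      have h3 : q * (n + 1) ≤ q * d := Nat.mul_le_mul_left q hcon
      rw [Nat.mul_succ] at h3
      linarith
    have h2 : q * (n - d) + q * d = q * n := by rw [← Nat.mul_add, Nat.sub_add_cancel hdn]
    have hp1 : p.1 = q * (n - d) + k := by linarith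
    have e1 : (p.1 - k) / q = n - d := by
      rw [hp1, Nat.add_sub_cancel, Nat.mul_div_cancel_left _ hq]
    have e2 : p.2 / q = d := by rw [hd, Nat.mul_div_cancel_left _ hq]
    rw [psExpand_coeff, if_pos ⟨d, hd⟩, e1, e2, psSect_coeff, ← hp1]

/-- The `k`-th `q`-section of a polynomial. -/
noncomputable def polySect (q k : ℕ) (P : K[X]) : K[X] :=
  ∑ n ∈ Finset.range (P.natDegree + 1), Polynomial.C (P.coeff (q * n + k)) * Polynomial.X ^ n

lemma polySect_coeff (q k : ℕ) (hq : 0 < q) (P : K[X]) (n : ℕ) :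
    (polySect q k P).coeff n = P.coeff (q * n + k) := by
  rw [polySect, Polynomial.finset_sum_coeff]
  simp only [Polynomial.coeff_C_mul, Polynomial.coeff_X_pow, mul_ite, mul_one, mul_zero]
  rw [Finset.sum_ite_eq (Finset.range (P.natDegree + 1)) n]
  by_cases hn : n ∈ Finset.range (P.natDegree + 1)
  · rw [if_pos hn]
  · rw [if_neg hn]
    rw [Finset.mem_range] at hn
    rw [Polynomial.coeff_eq_zero_of_natDegree_lt (by nlinarith)]

lemma polySect_coe (q k : ℕ) (hq : 0 < q) (P : K[X]) :
    ((polySect q k P : K[X]) : PowerSeries K) = psSect q k (P : PowerSeries K) := by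
  ext n
  rw [psSect_coeff, Polynomial.coeff_coe, Polynomial.coeff_coe, polySect_coeff q k hq]

lemma exists_polySect_ne_zero (q : ℕ) (hq : 0 < q) (P : K[X]) (hP : P ≠ 0) :
    ∃ k < q, polySect q k P ≠ 0 := by
  obtain ⟨n, hn⟩ : ∃ n, P.coeff n ≠ 0 := by
    by_contra h
    push_neg at h
    exact hP (Polynomial.ext fun n => by simp [h n])
  refine ⟨n % q, Nat.mod_lt _ hq, fun h0 => hn ?_⟩
  have := congrArg (fun Q => Polynomial.coeff Q (n / q)) h0
  simpa [polySect_coeff q _ hq, Nat.div_add_mod] using this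

end MahlerCompress

open MahlerCompress in
/-- a Mahler relation `q₋₁(z) + ∑_{i=1}^r q_i(z) f(z^{q^i}) = 0` (coefficients not
all zero) compresses to a relation `q̃₋₁(z) + ∑_{i=0}^{r-1} q̃_i(z) f(z^{q^i}) = 0` with
coefficients not all zero; moreover if `q_{j₀+1}` is the first nonzero coefficient among the
`q_i`, `i ≥ 1`, one can choose the compressed relation with `q̃_{j₀} ≠ 0`. -/
theorem mahler_compress_relation {K : Type*} [Field K] [CharZero K]
    (q r : ℕ) (hq : 2 ≤ q) (f : PowerSeries K)
    (qneg : K[X]) (qs : Fin r → K[X])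
    (hne : ¬ (qneg = 0 ∧ ∀ i, qs i = 0))
    (heq : (qneg : PowerSeries K) +
      ∑ i : Fin r, (qs i : PowerSeries K) * psExpand K (q ^ ((i : ℕ) + 1)) f = 0) :
    (∃ (tneg : K[X]) (ts : Fin r → K[X]), ¬ (tneg = 0 ∧ ∀ i, ts i = 0) ∧
      (tneg : PowerSeries K) +
        ∑ i : Fin r, (ts i : PowerSeries K) * psExpand K (q ^ (i : ℕ)) f = 0) ∧
    (∀ j0 : Fin r, qs j0 ≠ 0 → (∀ i < j0, qs i = 0) →
      ∃ (tneg : K[X]) (ts : Fin r → K[X]), ts j0 ≠ 0 ∧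
        (tneg : PowerSeries K) +
          ∑ i : Fin r, (ts i : PowerSeries K) * psExpand K (q ^ (i : ℕ)) f = 0) := by
  have hq0 : 0 < q := by omega
  -- key: every section of the relation is a relation of the compressed shape
  have key : ∀ k, k < q →
      ((polySect q k qneg : K[X]) : PowerSeries K) +
        ∑ i : Fin r, ((polySect q k (qs i) : K[X]) : PowerSeries K) *
          psExpand K (q ^ (i : ℕ)) f = 0 := by
    intro k hk
    have h := congrArg (psSect (K := K) q k) heq
    rw [map_add, map_sum, map_zero] at h
    rw [polySect_coe q k hq0]
    convert h using 2
    apply Finset.sum_congr rfl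
    intro i _
    rw [pow_succ', psExpand_mul q _ hq0, psSect_mul_expand q k hq0 hk,
      polySect_coe q k hq0]
  constructor
  · by_cases h : ∀ i, qs i = 0
    · exfalso
      apply hne
      refine ⟨?_, h⟩
      have : (qneg : PowerSeries K) = 0 := by
        have hz : ∑ i : Fin r, ((qs i : K[X]) : PowerSeries K) *
            psExpand K (q ^ ((i : ℕ) + 1)) f = 0 := by
          apply Finset.sum_eq_zero
          intro i _
          rw [h i]
          simp
        rw [hz, add_zero] at heq
        exact heq
      exact_mod_cast this
    · push_neg at h
      obtain ⟨i, hi⟩ := h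
      obtain ⟨k, hk, hne'⟩ := exists_polySect_ne_zero q hq0 (qs i) hi
      exact ⟨polySect q k qneg, fun j => polySect q k (qs j),
        fun h' => hne' (h'.2 i), key k hk⟩
  · intro j0 hj0 _
    obtain ⟨k, hk, hne'⟩ := exists_polySect_ne_zero q hq0 (qs j0) hj0
    exact ⟨polySect q k qneg, fun j => polySect q k (qs j), hne', key k hk⟩
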